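/- Suppose f is a meromorphic modular form of weight k on Γ₀(N) whose divisor is not supported entirely at the cusps, and let y₁ be the largest imaginary part of any point in ℍ belonging to the divisor of f. If −Θ(f(τ))/f(τ) = Σ_{n ≫ −∞} a(n) q^n is the Fourier expansion (q = e^{2πiτ}), then y₁ = limsup_{n→∞} log|a(n)|/(2πn). -/

import Mathlib

open Complex Real Filter Topology Asymptotics

noncomputable section

abbrev SL2Z := Matrix.SpecialLinearGroup (Fin 2) ℤ

/-- The congruence subgroup `Γ₀(N)`. -/
def Γ₀ (N : ℕ) : Subgroup SL2Z := CongruenceSubgroup.Gamma0 N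

/-- The `(i,j)` entry of `M`, as a complex number. -/
def mval (M : SL2Z) (i j : Fin 2) : ℂ := ((M : Matrix (Fin 2) (Fin 2) ℤ) i j : ℂ)

/-- The Möbius action `Mτ = (aτ+b)/(cτ+d)`. -/
def moeb (M : SL2Z) (τ : ℂ) : ℂ :=
  (mval M 0 0 * τ + mval M 0 1) / (mval M 1 0 * τ + mval M 1 1)

/-- The automorphy factor `j(M,τ) = cτ + d`. -/
def jfac (M : SL2Z) (τ : ℂ) : ℂ := mval M 1 0 * τ + mval M 1 1

/-- `φ_s(τ,z) = Im(z)^{1+s} (τ-z)⁻¹ (τ-z̄)⁻¹ |τ-z̄|^{-2s}`. -/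
def phiS (s τ z : ℂ) : ℂ :=
  (z.im : ℂ) ^ (1 + s) * (τ - z)⁻¹ * (τ - (starRingEnd ℂ) z)⁻¹ *
    ((‖τ - (starRingEnd ℂ) z‖ : ℝ) : ℂ) ^ (-2 * s)

/-- The Poincaré series `P_{N,s}(τ,z)`. -/
def Pser (N : ℕ) (s τ z : ℂ) : ℂ :=
  ∑' M : Γ₀ N, phiS s (moeb M τ) z /
    ((jfac M τ) ^ 2 * ((‖jfac M τ‖ : ℝ) : ℂ) ^ (2 * s))

/-- `Ψ` is the analytic continuation of `s ↦ P_{N,s}(τ,z)` to `s = 0`, i.e.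
`Im(z)·Ψ_{2,N}(τ,z)` is the value at `s = 0` of an analytic function agreeing with
`P_{N,s}(τ,z)` for `Re(s) > 0` near `0`. -/
def IsPsiCont (N : ℕ) (Ψ : ℂ → ℂ → ℂ) : Prop :=
  ∀ τ z : ℂ, 0 < τ.im → 0 < z.im →
    ∃ g : ℂ → ℂ, AnalyticAt ℂ g 0 ∧
      (∀ᶠ s in 𝓝[{s : ℂ | 0 < s.re}] (0 : ℂ), g s = Pser N s τ z) ∧
      g 0 = (z.im : ℂ) * Ψ τ z

/-- `H*_{N,z}(τ) := -(Im z/(2π)) Ψ_{2,N}(τ,z)`. -/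
def Hstar (N : ℕ) (Ψ : ℂ → ℂ → ℂ) (z τ : ℂ) : ℂ :=
  -((z.im : ℂ) / (2 * (π : ℂ))) * Ψ τ z

/-- The modified Bessel function of the first kind `I_ν`. -/
def besselI (ν x : ℂ) : ℂ :=
  ∑' k : ℕ, (x / 2) ^ (2 * k) * (x / 2) ^ ν / ((Nat.factorial k) * Complex.Gamma (k + ν + 1))

/-- The Bessel function of the first kind `J_ν`. -/
def besselJ (ν x : ℂ) : ℂ :=
  ∑' k : ℕ, (-1) ^ k * (x / 2) ^ (2 * k) * (x / 2) ^ ν /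
    ((Nat.factorial k) * Complex.Gamma (k + ν + 1))

/-- The translation matrix `T = (1 1; 0 1)`. -/
def TMat : SL2Z := ⟨!![1, 1; 0, 1], by simp [Matrix.det_fin_two_of]⟩

/-- `-I ∈ SL₂(ℤ)`. -/
def negI : SL2Z := ⟨!![-1, 0; 0, -1], by simp [Matrix.det_fin_two_of]⟩

/-- `Γ_∞ = {± (1 m; 0 1)}`, the subgroup generated by `T` and `-I`. -/
def GammaInf : Subgroup SL2Z := Subgroup.closure {TMat, negI}

/-- A canonical set of representatives for `Γ_∞\Γ₀(N)`: bottom row `(c,d)` with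
`c > 0` and `0 ≤ a < c`, together with the identity (representing the row `(0,±1)`). -/
def nieburRep (N : ℕ) : Set SL2Z :=
  {M | M ∈ Γ₀ N ∧
    ((0 < (M : Matrix (Fin 2) (Fin 2) ℤ) 1 0 ∧
      0 ≤ (M : Matrix (Fin 2) (Fin 2) ℤ) 0 0 ∧
      (M : Matrix (Fin 2) (Fin 2) ℤ) 0 0 < (M : Matrix (Fin 2) (Fin 2) ℤ) 1 0) ∨ M = 1)}

/-- The summand `e(-n Re(Mz)) Im(Mz)^{1/2} I_{s-1/2}(2πn Im(Mz))` of Niebur's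
Poincaré series, written using `Re w = (w + w̄)/2`. -/
def nieburSummand (n : ℕ) (s z : ℂ) (M : SL2Z) : ℂ :=
  Complex.exp (-(π : ℂ) * Complex.I * n * (moeb M z + (starRingEnd ℂ) (moeb M z))) *
    (((moeb M z).im : ℂ)) ^ (1/2 : ℂ) *
    besselI (s - 1/2) (2 * (π : ℂ) * n * ((moeb M z).im : ℂ))

/-- Niebur's Poincaré series `F_{N,-n,s}(z)`, summed over `Γ_∞\Γ₀(N)`. -/
def Fser (N n : ℕ) (s z : ℂ) : ℂ := ∑' M : nieburRep N, nieburSummand n s z M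

/-- `F` is, for each level `N ≥ 1` and each `n ≥ 1`, the analytic continuation
`F_{N,-n}` of `s ↦ F_{N,-n,s}(z)` to `s = 1`. -/
def IsNieburCont (F : ℕ → ℕ → ℂ → ℂ) : Prop :=
  ∀ N n : ℕ, 0 < N → 0 < n → ∀ z : ℂ, 0 < z.im →
    ∃ g : ℂ → ℂ, AnalyticAt ℂ g 1 ∧
      (∀ᶠ s in 𝓝[{s : ℂ | 1 < s.re}] (1 : ℂ), g s = Fser N n s z) ∧
      g 1 = F N n z

/-- `j_{N,n}(z) := 2π√n · F_{N,-n}(z)`. -/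
def jN (F : ℕ → ℕ → ℂ → ℂ) (N n : ℕ) (z : ℂ) : ℂ :=
  2 * (π : ℂ) * (Real.sqrt n : ℂ) * F N n z

/-- The normalized weight-0 Hecke operator
`(f | T(n))(z) = Σ_{ad = n} Σ_{b mod d} f((az+b)/d)`. -/
def heckeT (n : ℕ) (f : ℂ → ℂ) (z : ℂ) : ℂ :=
  ∑ a ∈ n.divisors, ∑ b ∈ Finset.range (n / a), f (((a : ℂ) ^ 2 * z + a * b) / n)

/-- The weight-`k` hyperbolic Laplacian
`Δ_k = -y²(∂²/∂x² + ∂²/∂y²) + iky(∂/∂x + i ∂/∂y)`. -/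
def wtLaplacian (k : ℤ) (f : ℂ → ℂ) (τ : ℂ) : ℂ :=
  -(τ.im : ℂ) ^ 2 *
      ((fderiv ℝ (fun w => (fderiv ℝ f w) 1) τ) 1 +
        (fderiv ℝ (fun w => (fderiv ℝ f w) Complex.I) τ) Complex.I) +
    Complex.I * (k : ℂ) * (τ.im : ℂ) *
      ((fderiv ℝ f τ) 1 + Complex.I * ((fderiv ℝ f τ) Complex.I))

/-- The classical Kloosterman sum `K(m,n;c) = Σ_{ad ≡ 1 (c)} e((md+na)/c)`. -/
def Kl (m n : ℤ) (c : ℕ) : ℂ :=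
  ∑' d : (ZMod c)ˣ,
    Complex.exp (2 * (π : ℂ) * Complex.I *
      (m * ((((d : ZMod c)).val : ℤ) : ℂ) + n * ((((d⁻¹ : (ZMod c)ˣ) : ZMod c)).val : ℂ)) / c)

/-- `ℓ` is the width of the cusp `M_ρ ∞` of `Γ₀(N)`. -/
def IsWidth (N : ℕ) (Mρ : SL2Z) (ℓ : ℕ) : Prop :=
  0 < ℓ ∧ Mρ * TMat ^ ℓ * Mρ⁻¹ ∈ Γ₀ N ∧
    ∀ k : ℕ, 0 < k → Mρ * TMat ^ k * Mρ⁻¹ ∈ Γ₀ N → ℓ ≤ k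

open Classical in
/-- The generalized Kloosterman sum `K_{𝔞,𝔟}(m,n;c)` attached to cusps with scaling
matrices `Ma, Mb` and widths `la, lb`: each double coset in
`Γ_∞^{l_𝔞}\M_𝔞⁻¹Γ₀(N)M_𝔟/Γ_∞^{l_𝔟}` with lower-left entry `c` is uniquely determined
by `(a mod la·c, d mod lb·c)`, and contributes `e(md/(lb·c) + na/(la·c))`. -/
def genKloos (N : ℕ) (Ma Mb : SL2Z) (la lb : ℕ) (m n : ℤ) (c : ℤ) : ℂ :=
  ∑' p : ZMod (la * c.natAbs) × ZMod (lb * c.natAbs),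
    if ∃ A : SL2Z, (∃ γ ∈ Γ₀ N, A = Ma⁻¹ * γ * Mb) ∧
        (A : Matrix (Fin 2) (Fin 2) ℤ) 1 0 = c ∧
        (((A : Matrix (Fin 2) (Fin 2) ℤ) 0 0 : ZMod (la * c.natAbs)) = p.1) ∧
        (((A : Matrix (Fin 2) (Fin 2) ℤ) 1 1 : ZMod (lb * c.natAbs)) = p.2)
    then Complex.exp (2 * (π : ℂ) * Complex.I *
        ((m * (p.2.val : ℂ)) / ((lb : ℂ) * c) + (n * (p.1.val : ℂ)) / ((la : ℂ) * c)))
    else 0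

/-- Two scaling matrices define `Γ₀(N)`-equivalent cusps. -/
def CuspEquiv (N : ℕ) (M₁ M₂ : SL2Z) : Prop :=
  ∃ γ ∈ Γ₀ N, M₂⁻¹ * γ * M₁ ∈ GammaInf

/-- Canonical representatives of the bottom rows `(c,d)` of `M_ρ M`, `M ∈ Γ₀(N)`,
up to sign; these index the cosets `Γ_ρ\Γ₀(N)`. -/
def eisRow (N : ℕ) (Mρ : SL2Z) : Set (ℤ × ℤ) :=
  {p | (0 < p.1 ∨ (p.1 = 0 ∧ 0 < p.2)) ∧
    ∃ M ∈ Γ₀ N, ((Mρ * M : SL2Z) : Matrix (Fin 2) (Fin 2) ℤ) 1 0 = p.1 ∧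
      ((Mρ * M : SL2Z) : Matrix (Fin 2) (Fin 2) ℤ) 1 1 = p.2}

/-- The weight-2 Eisenstein series `E*_{2,N,ρ,s}(τ) = Σ_{M ∈ Γ_ρ\Γ₀(N)}
j(M_ρM,τ)^{-2}|j(M_ρM,τ)|^{-2s}`. -/
def E2ser (N : ℕ) (Mρ : SL2Z) (s τ : ℂ) : ℂ :=
  ∑' p : eisRow N Mρ,
    (((p : ℤ × ℤ).1 : ℂ) * τ + ((p : ℤ × ℤ).2 : ℂ)) ^ (-2 : ℤ) *
      ((‖((p : ℤ × ℤ).1 : ℂ) * τ + ((p : ℤ × ℤ).2 : ℂ)‖ : ℝ) : ℂ) ^ (-2 * s)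

/-- `E` is the analytic continuation `E*_{2,N,ρ}` of `s ↦ E*_{2,N,ρ,s}(τ)` to `s = 0`. -/
def IsE2Cont (N : ℕ) (Mρ : SL2Z) (E : ℂ → ℂ) : Prop :=
  ∀ τ : ℂ, 0 < τ.im →
    ∃ g : ℂ → ℂ, AnalyticAt ℂ g 0 ∧
      (∀ᶠ s in 𝓝[{s : ℂ | 0 < s.re}] (0 : ℂ), g s = E2ser N Mρ s τ) ∧
      g 0 = E τ

/-- `f` is a meromorphic modular form of weight `k` on `Γ₀(N)` (meromorphy at the
cusps is imposed separately where needed). -/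
def IsMeroModular (N : ℕ) (k : ℤ) (f : ℂ → ℂ) : Prop :=
  (∀ τ : ℂ, 0 < τ.im → MeromorphicAt f τ) ∧
    ∀ γ ∈ Γ₀ N, ∀ τ : ℂ, 0 < τ.im → f (moeb γ τ) = (jfac γ τ) ^ k * f τ

open Classical in
/-- The order of vanishing of `f` at a point (0 if `f` is not meromorphic there). -/
def mOrd (f : ℂ → ℂ) (z : ℂ) : ℤ :=
  if h : MeromorphicAt f z then ((meromorphicOrderAt f z).untopD 0) else 0

/-- `f` is a holomorphic cusp form of weight 2 on `Γ₀(N)`. -/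
def IsCuspForm2 (N : ℕ) (g : ℂ → ℂ) : Prop :=
  (∀ τ : ℂ, 0 < τ.im → DifferentiableAt ℂ g τ) ∧
    (∀ γ ∈ Γ₀ N, ∀ τ : ℂ, 0 < τ.im → g (moeb γ τ) = (jfac γ τ) ^ 2 * g τ) ∧
    ∀ A : SL2Z, ∀ x : ℝ,
      Tendsto (fun y : ℝ => ((jfac A (x + y * Complex.I)) ^ 2)⁻¹ *
        g (moeb A (x + y * Complex.I))) atTop (𝓝 0)

private noncomputable def LG (f : ℂ → ℂ) (τ : ℂ) : ℂ := -deriv f τ / (2 * (π : ℂ) * Complex.I * f τ)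

private noncomputable def Acoef (a : ℤ → ℂ) (n₀ : ℤ) (n : ℕ) : ℝ := ‖a (n₀ + n)‖

private noncomputable def Eterm (n₀ : ℤ) (n : ℕ) (y : ℝ) : ℝ := Real.exp (-(2 * π * ((n₀ : ℝ) + n) * y))

private lemma key_tendsto (f : ℂ → ℂ) (z₁ : ℂ) (hm : MeromorphicAt f z₁) (m : ℤ)
    (hord : meromorphicOrderAt f z₁ = (m : ℤ)) :
    Tendsto (fun z => (z - z₁) * (deriv f z / f z)) (𝓝[≠] z₁) (𝓝 (m : ℂ)) := by
  obtain ⟨g, hg, hg0, heq⟩ := (meromorphicOrderAt_eq_int_iff hm).mp hord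
  have hup : ∀ᶠ z in 𝓝 z₁, z ≠ z₁ → f z = (z - z₁) ^ m * g z := by
    simpa [eventually_nhdsWithin_iff] using heq
  have hcomb : ∀ᶠ z in 𝓝 z₁,
      (z ≠ z₁ → f z = (z - z₁) ^ m * g z) ∧ AnalyticAt ℂ g z ∧ g z ≠ 0 :=
    hup.and ((hg.eventually_analyticAt).and (hg.continuousAt.eventually_ne hg0))
  obtain ⟨t, ht, hto, htz⟩ := eventually_nhds_iff.mp hcomb
  have heq2 : ∀ᶠ z in 𝓝[≠] z₁,
      (z - z₁) * (deriv f z / f z) = (m : ℂ) + (z - z₁) * (deriv g z / g z) := by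
    rw [eventually_nhdsWithin_iff]
    filter_upwards [hto.mem_nhds htz] with z hzt hz
    have hne : z - z₁ ≠ 0 := sub_ne_zero.mpr hz
    have hgz : g z ≠ 0 := (ht z hzt).2.2
    have hopen : IsOpen (t \ {z₁}) := hto.sdiff isClosed_singleton
    have hmem : t \ {z₁} ∈ 𝓝 z := hopen.mem_nhds ⟨hzt, hz⟩
    have hfeq : f =ᶠ[𝓝 z] fun w => (w - z₁) ^ m * g w := by
      filter_upwards [hmem] with w hw
      exact (ht w hw.1).1 hw.2
    have hd1 : HasDerivAt (fun w : ℂ => (w - z₁) ^ m) ((m : ℂ) * (z - z₁) ^ (m - 1)) z := by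
      simpa [Function.comp_def] using (hasDerivAt_zpow m (z - z₁) (Or.inl hne)).comp z
        ((hasDerivAt_id z).sub_const z₁)
    have hd2 : HasDerivAt g (deriv g z) z :=
      ((ht z hzt).2.1.differentiableAt).hasDerivAt
    have hd3 := hd1.mul hd2
    have hdf : deriv f z = (m : ℂ) * (z - z₁) ^ (m - 1) * g z + (z - z₁) ^ m * deriv g z :=
      hfeq.deriv_eq.trans hd3.deriv
    have hfz : f z = (z - z₁) ^ m * g z := (ht z hzt).1 hz
    rw [hdf, hfz]
    have hxm : (z - z₁) ^ m ≠ 0 := zpow_ne_zero _ hne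
    have hpow : (z - z₁) ^ (m - 1) = (z - z₁) ^ m / (z - z₁) := by
      rw [zpow_sub_one₀ hne, div_eq_mul_inv]
    rw [hpow]
    field_simp
  have hcont : ContinuousAt (fun z => (m : ℂ) + (z - z₁) * (deriv g z / g z)) z₁ := by
    have hderiv : AnalyticAt ℂ (deriv g) z₁ := by
      obtain ⟨s, hs, hso, hsz⟩ := eventually_nhds_iff.mp hg.eventually_analyticAt
      exact (AnalyticOnNhd.deriv (fun x hx => hs x hx)) z₁ hsz
    exact continuousAt_const.add ((continuousAt_id.sub continuousAt_const).mul
      ((hderiv.continuousAt.div hg.continuousAt hg0)))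
  have hlim : Tendsto (fun z => (m : ℂ) + (z - z₁) * (deriv g z / g z)) (𝓝[≠] z₁)
      (𝓝 (m : ℂ)) := by
    have h0 : Tendsto (fun z => (m : ℂ) + (z - z₁) * (deriv g z / g z)) (𝓝[≠] z₁)
        (𝓝 ((m : ℂ) + (z₁ - z₁) * (deriv g z₁ / g z₁))) :=
      (hcont.continuousWithinAt).tendsto
    simpa using h0
  have heq2' : (fun z => (z - z₁) * (deriv f z / f z)) =ᶠ[𝓝[≠] z₁]
      (fun z => (m : ℂ) + (z - z₁) * (deriv g z / g z)) := heq2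
  exact hlim.congr' heq2'.symm

private lemma key_tendstoG (f : ℂ → ℂ) (z₁ : ℂ) (hm : MeromorphicAt f z₁) (m : ℤ)
    (hord : meromorphicOrderAt f z₁ = (m : ℤ)) :
    Tendsto (fun z => (z - z₁) * LG f z) (𝓝[≠] z₁)
      (𝓝 (-(m : ℂ) / (2 * (π : ℂ) * Complex.I))) := by
  have h1 := key_tendsto f z₁ hm m hord
  have h2 : Tendsto (fun z => -((z - z₁) * (deriv f z / f z)) / (2 * (π : ℂ) * Complex.I))
      (𝓝[≠] z₁) (𝓝 (-(m : ℂ) / (2 * (π : ℂ) * Complex.I))) := h1.neg.div_const _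
  refine h2.congr fun z => ?_
  simp only [LG, div_eq_mul_inv, mul_inv]
  ring

private lemma summable_of_eventually_le {u v : ℕ → ℝ} (hu : ∀ n, 0 ≤ u n)
    (h : ∀ᶠ n in atTop, u n ≤ v n) (hv : Summable v) : Summable u := by
  obtain ⟨N, hN⟩ := eventually_atTop.mp h
  rw [← summable_nat_add_iff N]
  exact Summable.of_nonneg_of_le (fun n => hu _) (fun n => hN _ (Nat.le_add_left N n))
    ((summable_nat_add_iff N).mpr hv)

private lemma norm_qterm (a : ℤ → ℂ) (n₀ : ℤ) (n : ℕ) (τ : ℂ) :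
    ‖a (n₀ + n) * Complex.exp (2 * (π : ℂ) * Complex.I * ((n₀ : ℂ) + (n : ℂ)) * τ)‖ =
      Acoef a n₀ n * Eterm n₀ n τ.im := by
  have hc : ((n₀ : ℂ) + (n : ℂ)) = ((((n₀ : ℝ) + (n : ℝ)) : ℝ) : ℂ) := by push_cast; ring
  rw [hc, norm_mul, Complex.norm_exp,
    Acoef, Eterm]
  congr 1
  simp [Complex.mul_re, Complex.mul_im]

private lemma mono_summable (a : ℤ → ℂ) (n₀ : ℤ) {y y' : ℝ} (h : y ≤ y')
    (hs : Summable (fun n => Acoef a n₀ n * Eterm n₀ n y)) :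
    Summable (fun n => Acoef a n₀ n * Eterm n₀ n y') := by
  apply summable_of_eventually_le (fun n => by unfold Acoef Eterm; positivity) ?_ hs
  rw [eventually_atTop]
  refine ⟨n₀.natAbs, fun n hn => ?_⟩
  have hm : (0 : ℝ) ≤ (n₀ : ℝ) + n := by
    have : (0 : ℤ) ≤ n₀ + n := by
      have : (n₀.natAbs : ℤ) ≤ (n : ℤ) := by exact_mod_cast hn
      omega
    exact_mod_cast this
  apply mul_le_mul_of_nonneg_left _ (by unfold Acoef; positivity)
  rw [Eterm, Eterm, Real.exp_le_exp]
  have hπ := Real.pi_pos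
  nlinarith [mul_le_mul_of_nonneg_left h (by positivity : (0:ℝ) ≤ 2 * π * ((n₀:ℝ) + n))]

/-- Let `f` be a meromorphic modular form of weight `k` on `Γ₀(N)`
whose divisor is not supported entirely at the cusps, and let `y₁ = Im z₁` be the
largest imaginary part of a point of the divisor of `f` in `ℍ`. If
`-Θ(f)/f = Σ_{n ≫ -∞} a(n) qⁿ`, then `y₁ = limsup_{n→∞} log|a(n)|/(2πn)`. -/
theorem statement11 (N : ℕ) (hN : 0 < N) (k : ℤ) (f : ℂ → ℂ)
    (hf : IsMeroModular N k f)
    (z₁ : ℂ) (hz₁ : 0 < z₁.im) (hz₁' : mOrd f z₁ ≠ 0)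
    (hmax : ∀ z : ℂ, 0 < z.im → mOrd f z ≠ 0 → z.im ≤ z₁.im)
    (n₀ : ℤ) (a : ℤ → ℂ)
    (ha : ∀ τ : ℂ, z₁.im < τ.im →
      -(deriv f τ) / (2 * (π : ℂ) * Complex.I * f τ) =
        ∑' n : ℕ, a (n₀ + n) *
          Complex.exp (2 * (π : ℂ) * Complex.I * ((n₀ : ℂ) + (n : ℂ)) * τ)) :
    z₁.im = Filter.limsup
      (fun n : ℕ => Real.log ‖a (n : ℤ)‖ / (2 * π * n)) atTop := by
  have hmero : MeromorphicAt f z₁ := hf.1 z₁ hz₁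
  have hmval : mOrd f z₁ = (meromorphicOrderAt f z₁).untopD 0 := by
    simp only [mOrd]
    rw [dif_pos hmero]
  have htop : meromorphicOrderAt f z₁ ≠ ⊤ := by
    intro h
    apply hz₁'
    rw [hmval, h]
    rfl
  obtain ⟨m, hmi⟩ := WithTop.ne_top_iff_exists.mp htop
  have hordm : meromorphicOrderAt f z₁ = (m : ℤ) := hmi.symm
  have hm0 : m ≠ 0 := by
    intro h
    apply hz₁'
    rw [hmval, ← hmi, h]
    rfl
  set c : ℂ := -(m : ℂ) / (2 * (π : ℂ) * Complex.I) with hcdef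
  have hc0 : c ≠ 0 := by
    apply div_ne_zero
    · simpa using hm0
    · simp [Real.pi_ne_zero, Complex.ext_iff]
  have hG := key_tendstoG f z₁ hmero m hordm
  have hψim : ∀ t : ℝ, (z₁ + (t : ℂ) * Complex.I).im = z₁.im + t := fun t => by simp
  have hψ : Tendsto (fun t : ℝ => z₁ + (t : ℂ) * Complex.I) (𝓝[>] (0 : ℝ)) (𝓝[≠] z₁) := by
    rw [tendsto_nhdsWithin_iff]
    constructor
    · have hcont : Continuous (fun t : ℝ => z₁ + (t : ℂ) * Complex.I) :=
        continuous_const.add (Complex.continuous_ofReal.mul continuous_const)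
      have h := (hcont.tendsto 0).mono_left (nhdsWithin_le_nhds (s := Set.Ioi (0 : ℝ)))
      simpa using h
    · filter_upwards [self_mem_nhdsWithin] with t ht
      have ht' : (0 : ℝ) < t := ht
      simp only [Set.mem_compl_iff, Set.mem_singleton_iff]
      intro hcc
      have him := hψim t
      rw [hcc] at him
      linarith
  have hGt : Tendsto
      (fun t : ℝ => ((z₁ + (t : ℂ) * Complex.I) - z₁) * LG f (z₁ + (t : ℂ) * Complex.I))
      (𝓝[>] (0 : ℝ)) (𝓝 c) := hG.comp hψ
  have haG : ∀ τ : ℂ, z₁.im < τ.im → LG f τ =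
      ∑' n : ℕ, a (n₀ + n) * Complex.exp (2 * (π : ℂ) * Complex.I * ((n₀ : ℂ) + (n : ℂ)) * τ) :=
    fun τ h => ha τ h
  -- Part A: summability above y₁
  have hSum : ∀ y : ℝ, z₁.im < y → Summable (fun n : ℕ => Acoef a n₀ n * Eterm n₀ n y) := by
    by_contra hcon
    push_neg at hcon
    obtain ⟨y, hy, hns⟩ := hcon
    have hzero : ∀ t : ℝ, 0 < t → t < y - z₁.im →
        LG f (z₁ + (t : ℂ) * Complex.I) = 0 := by
      intro t ht ht'
      set τ := z₁ + (t : ℂ) * Complex.I with hτdef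
      have him : τ.im = z₁.im + t := hψim t
      have h1 : z₁.im < τ.im := by rw [him]; linarith
      have h2 : ¬ Summable (fun n : ℕ => a (n₀ + n) *
          Complex.exp (2 * (π : ℂ) * Complex.I * ((n₀ : ℂ) + (n : ℂ)) * τ)) := by
        intro hs
        apply hns
        apply mono_summable a n₀ (show τ.im ≤ y by rw [him]; linarith)
        simpa only [norm_qterm] using hs.norm
      rw [haG τ h1, tsum_eq_zero_of_not_summable h2]
    have hev : (fun t : ℝ =>
        ((z₁ + (t : ℂ) * Complex.I) - z₁) * LG f (z₁ + (t : ℂ) * Complex.I))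
        =ᶠ[𝓝[>] (0 : ℝ)] (fun _ => 0) := by
      have hmem : Set.Ioo (0 : ℝ) (y - z₁.im) ∈ 𝓝[>] (0 : ℝ) :=
        Ioo_mem_nhdsGT_of_mem ⟨le_refl 0, by linarith⟩
      filter_upwards [hmem] with t ht
      rw [hzero t ht.1 ht.2, mul_zero]
    have h0 : Tendsto (fun t : ℝ =>
        ((z₁ + (t : ℂ) * Complex.I) - z₁) * LG f (z₁ + (t : ℂ) * Complex.I))
        (𝓝[>] (0 : ℝ)) (𝓝 0) := by
      rw [tendsto_congr' hev]
      exact tendsto_const_nhds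
    exact hc0 (tendsto_nhds_unique hGt h0)
  -- Part A2: upper bound membership
  have hmemS : ∀ y : ℝ, z₁.im < y →
      ∀ᶠ n : ℕ in atTop, Real.log ‖a (n : ℤ)‖ / (2 * π * n) ≤ y := by
    intro y hy
    have hy0 : 0 < y := lt_trans hz₁ hy
    have hbd : ∀ᶠ j : ℕ in atTop, Acoef a n₀ j * Eterm n₀ j y ≤ 1 :=
      (hSum y hy).tendsto_atTop_zero.eventually (eventually_le_nhds one_pos)
    obtain ⟨J, hJ⟩ := eventually_atTop.mp hbd
    rw [eventually_atTop]
    refine ⟨J + n₀.natAbs + 1, fun n hn => ?_⟩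
    have hn1 : 1 ≤ n := by omega
    set j : ℕ := ((n : ℤ) - n₀).toNat with hjdef
    have hj : n₀ + (j : ℤ) = (n : ℤ) := by omega
    have hJj : J ≤ j := by omega
    have hb := hJ j hJj
    have hAj : Acoef a n₀ j = ‖a (n : ℤ)‖ := by rw [Acoef, hj]
    have hcast : (n₀ : ℝ) + (j : ℝ) = (n : ℝ) := by exact_mod_cast hj
    have hEj : Eterm n₀ j y = Real.exp (-(2 * π * (n : ℝ) * y)) := by
      rw [Eterm, hcast]
    rw [hAj, hEj] at hb
    have hexp : ‖a (n : ℤ)‖ ≤ Real.exp (2 * π * (n : ℝ) * y) := by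
      have h1 := mul_le_mul_of_nonneg_right hb (le_of_lt (Real.exp_pos (2 * π * (n : ℝ) * y)))
      rw [one_mul, mul_assoc, ← Real.exp_add] at h1
      simpa using h1
    have hlog : Real.log ‖a (n : ℤ)‖ ≤ 2 * π * (n : ℝ) * y := by
      rcases eq_or_lt_of_le (norm_nonneg (a (n : ℤ))) with h0 | h0
      · rw [← h0, Real.log_zero]
        have hπ := Real.pi_pos
        have hn' : (1 : ℝ) ≤ (n : ℝ) := by exact_mod_cast hn1
        positivity
      · rw [Real.log_le_iff_le_exp h0]
        exact hexp
    have hden : (0 : ℝ) < 2 * π * (n : ℝ) := by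
      have hπ := Real.pi_pos
      have hn' : (1 : ℝ) ≤ (n : ℝ) := by exact_mod_cast hn1
      positivity
    rw [div_le_iff₀ hden]
    linarith
  -- Part B: no eventual bound below y₁
  have hnotbd : ∀ y : ℝ, y < z₁.im →
      ¬ (∀ᶠ n : ℕ in atTop, Real.log ‖a (n : ℤ)‖ / (2 * π * n) ≤ y) := by
    intro y hy hevent
    have hbd : ∀ᶠ j : ℕ in atTop, Acoef a n₀ j ≤ Real.exp (2 * π * ((n₀ : ℝ) + j) * y) := by
      obtain ⟨M, hM⟩ := eventually_atTop.mp hevent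
      rw [eventually_atTop]
      refine ⟨M + n₀.natAbs + M + 1, fun j hj => ?_⟩
      obtain ⟨n, hn, hMn, h1n⟩ : ∃ n : ℕ, (n : ℤ) = n₀ + j ∧ M ≤ n ∧ 1 ≤ n :=
        ⟨(n₀ + (j : ℤ)).toNat, by omega, by omega, by omega⟩
      have hden : (0 : ℝ) < 2 * π * (n : ℝ) := by
        have hπ := Real.pi_pos
        have hn' : (1 : ℝ) ≤ (n : ℝ) := by exact_mod_cast h1n
        positivity
      have h2 := hM n hMn
      rw [div_le_iff₀ hden] at h2
      have hexp : ‖a (n : ℤ)‖ ≤ Real.exp (2 * π * (n : ℝ) * y) := by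
        rcases eq_or_lt_of_le (norm_nonneg (a (n : ℤ))) with h0 | h0
        · rw [← h0]
          positivity
        · rw [← Real.exp_log h0, Real.exp_le_exp]
          linarith
      have hAa : Acoef a n₀ j = ‖a (n : ℤ)‖ := by rw [Acoef, ← hn]
      have hcast : (n₀ : ℝ) + (j : ℝ) = (n : ℝ) := by
        exact_mod_cast hn.symm
      rw [hAa, hcast]
      exact hexp
    set d : ℝ := z₁.im - y with hddef
    have hd0 : 0 < d := by rw [hddef]; linarith
    set w : ℕ → ℝ := fun n => Acoef a n₀ n * Eterm n₀ n z₁.im *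
      (if (n₀ : ℝ) + n < 0 then Real.exp (-(2 * π * ((n₀ : ℝ) + n))) else 1) with hwdef
    have hwnn : ∀ n, 0 ≤ w n := by
      intro n
      rw [hwdef]
      apply mul_nonneg (mul_nonneg (by unfold Acoef; positivity) (by unfold Eterm; positivity))
      split_ifs
      · positivity
      · norm_num
    have hwsum : Summable w := by
      apply summable_of_eventually_le hwnn ?_
        (Summable.mul_left (Real.exp (-(2 * π * (n₀ : ℝ) * d)))
          (summable_geometric_of_lt_one (r := Real.exp (-(2 * π * d))) (Real.exp_nonneg _)
            (Real.exp_lt_one_iff.mpr (by have hπ := Real.pi_pos; nlinarith))))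
      rw [eventually_atTop]
      obtain ⟨M, hM⟩ := eventually_atTop.mp hbd
      refine ⟨M + n₀.natAbs, fun j hj => ?_⟩
      have hm : (0 : ℝ) ≤ (n₀ : ℝ) + j := by
        have : (0 : ℤ) ≤ n₀ + j := by omega
        exact_mod_cast this
      rw [hwdef]
      simp only [if_neg (not_lt.mpr hm), mul_one]
      have h1 : Acoef a n₀ j * Eterm n₀ j z₁.im ≤
          Real.exp (2 * π * ((n₀ : ℝ) + j) * y) * Eterm n₀ j z₁.im :=
        mul_le_mul_of_nonneg_right (hM j (by omega)) (by unfold Eterm; positivity)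
      refine le_trans h1 (le_of_eq ?_)
      rw [← Real.exp_nat_mul, ← Real.exp_add, Eterm, ← Real.exp_add, Real.exp_eq_exp, hddef]
      ring
    set C : ℝ := ∑' n, w n with hCdef
    have hGbd : ∀ t : ℝ, 0 < t → t ≤ 1 →
        ‖LG f (z₁ + (t : ℂ) * Complex.I)‖ ≤ C := by
      intro t ht ht1
      set τ := z₁ + (t : ℂ) * Complex.I with hτdef
      have him : τ.im = z₁.im + t := hψim t
      have h1 : z₁.im < τ.im := by rw [him]; linarith
      have hptbd : ∀ n : ℕ, ‖a (n₀ + n) *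
          Complex.exp (2 * (π : ℂ) * Complex.I * ((n₀ : ℂ) + (n : ℂ)) * τ)‖ ≤ w n := by
        intro n
        rw [norm_qterm, him]
        simp only [hwdef]
        have hπ := Real.pi_pos
        by_cases hsgn : (n₀ : ℝ) + n < 0
        · rw [if_pos hsgn]
          rw [mul_assoc]
          apply mul_le_mul_of_nonneg_left ?_ (by unfold Acoef; positivity)
          rw [Eterm, Eterm, ← Real.exp_add, Real.exp_le_exp]
          have h2π : (0:ℝ) < 2 * π := by positivity
          nlinarith [mul_le_mul_of_nonneg_left ht1
            (mul_nonneg h2π.le (neg_nonneg.2 hsgn.le))]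
        · rw [if_neg hsgn, mul_one]
          apply mul_le_mul_of_nonneg_left ?_ (by unfold Acoef; positivity)
          rw [Eterm, Eterm, Real.exp_le_exp]
          push_neg at hsgn
          have h2π : (0:ℝ) < 2 * π := by positivity
          nlinarith [mul_nonneg (mul_nonneg h2π.le hsgn) ht.le]
      have hsummτ : Summable (fun n : ℕ => a (n₀ + n) *
          Complex.exp (2 * (π : ℂ) * Complex.I * ((n₀ : ℂ) + (n : ℂ)) * τ)) :=
        Summable.of_norm_bounded hwsum hptbd
      rw [haG τ h1]
      calc ‖∑' n : ℕ, a (n₀ + n) *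
            Complex.exp (2 * (π : ℂ) * Complex.I * ((n₀ : ℂ) + (n : ℂ)) * τ)‖
          ≤ ∑' n : ℕ, ‖a (n₀ + n) *
            Complex.exp (2 * (π : ℂ) * Complex.I * ((n₀ : ℂ) + (n : ℂ)) * τ)‖ :=
            norm_tsum_le_tsum_norm hsummτ.norm
        _ ≤ C := Summable.tsum_le_tsum hptbd hsummτ.norm hwsum
    have h0 : Tendsto (fun t : ℝ =>
        ((z₁ + (t : ℂ) * Complex.I) - z₁) * LG f (z₁ + (t : ℂ) * Complex.I))
        (𝓝[>] (0 : ℝ)) (𝓝 0) := by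
      apply squeeze_zero_norm' (a := fun t : ℝ => t * C) ?_ ?_
      · have hmem : Set.Ioo (0 : ℝ) 1 ∈ 𝓝[>] (0 : ℝ) :=
          Ioo_mem_nhdsGT_of_mem ⟨le_refl 0, one_pos⟩
        filter_upwards [hmem] with t ht
        rw [norm_mul]
        have hn1 : ‖(z₁ + (t : ℂ) * Complex.I) - z₁‖ = t := by
          simp [abs_of_pos ht.1]
        rw [hn1]
        exact mul_le_mul_of_nonneg_left (hGbd t ht.1 (le_of_lt ht.2)) (le_of_lt ht.1)
      · have hlin : Tendsto (fun t : ℝ => t * C) (𝓝 0) (𝓝 (0 * C)) :=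
          (continuous_id.mul continuous_const).tendsto 0
        have := hlin.mono_left (nhdsWithin_le_nhds (s := Set.Ioi (0 : ℝ)))
        simpa using this
    exact hc0 (tendsto_nhds_unique hGt h0)
  -- Assembly
  rw [Filter.limsup_eq]
  have hlbset : ∀ s ∈ {a' : ℝ | ∀ᶠ n : ℕ in atTop,
      Real.log ‖a (n : ℤ)‖ / (2 * π * n) ≤ a'}, z₁.im ≤ s := by
    intro s hs
    by_contra hcontra
    push_neg at hcontra
    exact hnotbd s hcontra hs
  apply le_antisymm
  · exact le_csInf ⟨z₁.im + 1, hmemS _ (by linarith)⟩ hlbset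
  · refine le_of_forall_pos_le_add fun ε hε => ?_
    exact csInf_le ⟨z₁.im, hlbset⟩ (hmemS _ (by linarith))

end
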